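/- The constructive behavioral semantics refines the logical behavioral semantics: for all Kernel Esterel programs p, p', constructive events E, E', and completion codes k, if E is total (no signal maps to ⊥) and E ⊢ p → (E', k, p') is derivable in the constructive behavioral semantics, then CtoK(E) ⊢ p → (CtoK(E'), k, p') is derivable in the logical behavioral semantics, where CtoK converts a total constructive event to a classical event by sending + to + and − to −. -/
import Mathlib


namespace EsterelCBS

/-- Signals are represented by natural numbers. -/
abbrev Signal := ℕ

/-- Kernel Esterel statements.  `done k` unifies `nothing` (k = 0), `pause` (k = 1)
and `exit k` (k ≥ 2).  `awaitImm pol s` waits for `s` to have the status given by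
the polarity `pol` (`awaitImm true s` is the kernel statement `await immediate s`;
the negative polarity is used in the derivative of `suspend`). -/
inductive Stmt : Type
  | done (k : ℕ)
  | emit (s : Signal)
  | awaitImm (pol : Bool) (s : Signal)
  | present (s : Signal) (p q : Stmt)
  | suspend (s : Signal) (p : Stmt)
  | seq (p q : Stmt)
  | par (p q : Stmt)
  | loop (p : Stmt)
  | trap (p : Stmt)
  | shift (p : Stmt)
  | sig (s : Signal) (p : Stmt)
  deriving DecidableEq

/-- Constructive signal statuses: present (+), absent (−), or unknown (⊥). -/
inductive CStatus : Type
  | pos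
  | neg
  | bot
  deriving DecidableEq

/-- Statuses are combined by "present dominates, unknown next". -/
def CStatus.or : CStatus → CStatus → CStatus
  | .pos, _ => .pos
  | _, .pos => .pos
  | .bot, _ => .bot
  | _, .bot => .bot
  | _, _ => .neg

/-- A constructive event is a finite map from signals to constructive statuses;
`none` means the signal is not in scope (not visible). -/
abbrev CEvent := Signal → Option CStatus

namespace CEvent

/-- The empty output event relative to `E`: every visible signal is absent. -/
def blank (E : CEvent) : CEvent := fun s => (E s).map fun _ => CStatus.neg

/-- The singleton output event emitting `s` (all other visible signals absent). -/
def single (E : CEvent) (s : Signal) : CEvent :=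
  fun t => if t = s then (E t).map fun _ => CStatus.pos
           else (E t).map fun _ => CStatus.neg

/-- Union of two output events. -/
def union (E₁ E₂ : CEvent) : CEvent := fun s =>
  match E₁ s, E₂ s with
  | some a, some b => some (a.or b)
  | some a, none => some a
  | none, o => o

/-- Update the status of a signal (possibly adding it to the domain). -/
def update (E : CEvent) (s : Signal) (v : CStatus) : CEvent :=
  fun t => if t = s then some v else E t

/-- Restriction of an output event by a local signal declaration: the binding of
the (new) signal `s` is replaced by the appropriate status − for the (old) `s`
(which is absent if the old `s` was not in scope). -/
def restrict (E' : CEvent) (s : Signal) (old : Option CStatus) : CEvent :=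
  fun t => if t = s then old.map (fun _ => CStatus.neg) else E' t

/-- The domain of an event: the set of signals in scope. -/
def dom (E : CEvent) : Set Signal := {s | E s ≠ none}

/-- A constructive event is total when no signal is mapped to ⊥. -/
def Total (E : CEvent) : Prop := ∀ s, E s ≠ some CStatus.bot

end CEvent

/-- Completion-code shift `↑` used by the `shift` statement. -/
def kup (k : ℕ) : ℕ := if 2 ≤ k then k + 1 else k

/-- Completion-code decrement `↓` used by the `trap` statement. -/
def kdown (k : ℕ) : ℕ := if k < 2 then k else if k = 2 then 0 else k - 1

/-- The δ function killing derivatives when the completion code is not 1. -/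
def delta (k : ℕ) (p : Stmt) : Stmt := if k = 1 then p else .done 0

/-- The constructive status corresponding to a polarity. -/
def polSt : Bool → CStatus
  | true => .pos
  | false => .neg

/-- Pairwise max of two sets of completion codes
(`Max K L = { max k l | k ∈ K, l ∈ L }`). -/
def codeMax (K L : Finset ℕ) : Finset ℕ := K.biUnion fun k => L.image (max k)

mutual

/-- `must p E = (Must_S(p,E), Must_K(p,E))`: the signals that must be emitted and
the completion codes that must be returned by `p` under `E` (paper Fig. 2). -/
def must : Stmt → CEvent → Finset Signal × Finset ℕ
  | .done k, _ => (∅, {k})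
  | .emit s, _ => ({s}, {0})
  | .awaitImm pol s, E =>
      if E s = some (polSt pol) then (∅, {0})
      else if E s = some (polSt (!pol)) then (∅, {1})
      else (∅, ∅)
  | .present s p q, E =>
      if E s = some .pos then must p E
      else if E s = some .neg then must q E
      else (∅, ∅)
  | .suspend _ p, E => must p E
  | .seq p q, E =>
      if 0 ∈ (must p E).2 then
        ((must p E).1 ∪ (must q E).1, (must q E).2)
      else must p E
  | .par p q, E =>
      ((must p E).1 ∪ (must q E).1, codeMax (must p E).2 (must q E).2)
  | .loop p, E => must p E
  | .trap p, E => ((must p E).1, (must p E).2.image kdown)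
  | .shift p, E => ((must p E).1, (must p E).2.image kup)
  | .sig s p, E =>
      if s ∈ (must p (E.update s .bot)).1 then
        (((must p (E.update s .pos)).1).erase s, (must p (E.update s .pos)).2)
      else if s ∉ (can true p (E.update s .bot)).1 then
        (((must p (E.update s .neg)).1).erase s, (must p (E.update s .neg)).2)
      else
        (((must p (E.update s .bot)).1).erase s, (must p (E.update s .bot)).2)

/-- `can b p E = (Can^b_S(p,E), Can^b_K(p,E))`: the signals that can be emitted
and the completion codes that can be returned by `p` under `E` (paper Fig. 2). -/
def can : Bool → Stmt → CEvent → Finset Signal × Finset ℕ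
  | _, .done k, _ => (∅, {k})
  | _, .emit s, _ => ({s}, {0})
  | _, .awaitImm pol s, E =>
      if E s = some (polSt pol) then (∅, {0})
      else if E s = some (polSt (!pol)) then (∅, {1})
      else (∅, {0, 1})
  | b, .present s p q, E =>
      if E s = some .pos then can b p E
      else if E s = some .neg then can b q E
      else ((can false p E).1 ∪ (can false q E).1,
            (can false p E).2 ∪ (can false q E).2)
  | b, .suspend _ p, E => can b p E
  | b, .seq p q, E =>
      if 0 ∉ (can b p E).2 then can b p E
      else if 0 ∈ (must p E).2 ∧ b = true then
        ((can b p E).1 ∪ (can true q E).1,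
         ((can b p E).2.erase 0) ∪ (can true q E).2)
      else
        ((can b p E).1 ∪ (can false q E).1,
         ((can b p E).2.erase 0) ∪ (can false q E).2)
  | b, .par p q, E =>
      ((can b p E).1 ∪ (can b q E).1, codeMax (can b p E).2 (can b q E).2)
  | b, .loop p, E => can b p E
  | b, .trap p, E => ((can b p E).1, (can b p E).2.image kdown)
  | b, .shift p, E => ((can b p E).1, (can b p E).2.image kup)
  | b, .sig s p, E =>
      if s ∈ (must p (E.update s .bot)).1 ∧ b = true then
        (((can b p (E.update s .pos)).1).erase s, (can b p (E.update s .pos)).2)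
      else if s ∉ (can true p (E.update s .bot)).1 then
        (((can b p (E.update s .neg)).1).erase s, (can b p (E.update s .neg)).2)
      else
        (((can b p (E.update s .bot)).1).erase s, (can b p (E.update s .bot)).2)

end

/-- The constructive behavioral semantics (CBS): `CBS E p E' k p'` means
`E ⊢ p → (E', k, p')`.  The rules are the same as for the logical behavioral
semantics except for the local signal declaration rules, which use `must`/`can`. -/
inductive CBS : CEvent → Stmt → CEvent → ℕ → Stmt → Prop
  | done {E : CEvent} {k : ℕ} :
      CBS E (.done k) E.blank k (.done 0)
  | emit {E : CEvent} {s : Signal} (h : E s ≠ none) :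
      CBS E (.emit s) (E.single s) 0 (.done 0)
  | awaitP {E : CEvent} {pol : Bool} {s : Signal}
      (h : E s = some (polSt pol)) :
      CBS E (.awaitImm pol s) E.blank 0 (.done 0)
  | awaitM {E : CEvent} {pol : Bool} {s : Signal}
      (h : E s = some (polSt (!pol))) :
      CBS E (.awaitImm pol s) E.blank 1 (.awaitImm pol s)
  | presentP {E E' : CEvent} {s : Signal} {p q p' : Stmt} {k : ℕ}
      (h : E s = some .pos) (hp : CBS E p E' k p') :
      CBS E (.present s p q) E' k p'
  | presentM {E E' : CEvent} {s : Signal} {p q q' : Stmt} {k : ℕ}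
      (h : E s = some .neg) (hq : CBS E q E' k q') :
      CBS E (.present s p q) E' k q'
  | suspend {E E' : CEvent} {s : Signal} {p p' : Stmt} {k : ℕ}
      (hp : CBS E p E' k p') :
      CBS E (.suspend s p) E' k
        (delta k (.seq (.awaitImm false s) (.suspend s p')))
  | seqK {E E' : CEvent} {p q p' : Stmt} {k : ℕ}
      (h : k ≠ 0) (hp : CBS E p E' k p') :
      CBS E (.seq p q) E' k (delta k (.seq p' q))
  | seq0 {E E₁ E₂ : CEvent} {p q p' q' : Stmt} {k : ℕ}
      (hp : CBS E p E₁ 0 p') (hq : CBS E q E₂ k q') :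
      CBS E (.seq p q) (E₁.union E₂) k q'
  | loop {E E' : CEvent} {p p' : Stmt} {k : ℕ}
      (h : k ≠ 0) (hp : CBS E p E' k p') :
      CBS E (.loop p) E' k (delta k (.seq p' (.loop p)))
  | trap {E E' : CEvent} {p p' : Stmt} {k : ℕ}
      (hp : CBS E p E' k p') :
      CBS E (.trap p) E' (kdown k) (delta k (.trap p'))
  | shift {E E' : CEvent} {p p' : Stmt} {k : ℕ}
      (hp : CBS E p E' k p') :
      CBS E (.shift p) E' (kup k) (delta k (.shift p'))
  | par {E E₁ E₂ : CEvent} {p q p' q' : Stmt} {k₁ k₂ : ℕ}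
      (hp : CBS E p E₁ k₁ p') (hq : CBS E q E₂ k₂ q') :
      CBS E (.par p q) (E₁.union E₂) (max k₁ k₂)
        (delta (max k₁ k₂) (.par p' q'))
  | sigP {E E' : CEvent} {s : Signal} {p p' : Stmt} {k : ℕ}
      (h : s ∈ (must p (E.update s .bot)).1)
      (hp : CBS (E.update s .pos) p E' k p') :
      CBS E (.sig s p) (E'.restrict s (E s)) k (delta k (.sig s p'))
  | sigM {E E' : CEvent} {s : Signal} {p p' : Stmt} {k : ℕ}
      (h : s ∉ (can true p (E.update s .bot)).1)
      (hp : CBS (E.update s .neg) p E' k p') :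
      CBS E (.sig s p) (E'.restrict s (E s)) k (delta k (.sig s p'))

end EsterelCBS

namespace EsterelCBS

/-- Classical signal statuses: present (+) or absent (−). -/
inductive Status : Type
  | pos
  | neg
  deriving DecidableEq

/-- Statuses are combined by "present dominates". -/
def Status.or : Status → Status → Status
  | .pos, _ => .pos
  | _, .pos => .pos
  | _, _ => .neg

/-- A classical event is a finite map from signals to statuses. -/
abbrev Event := Signal → Option Status

namespace Event

/-- The empty output event relative to `E`: every visible signal is absent. -/
def blank (E : Event) : Event := fun s => (E s).map fun _ => Status.neg

/-- The singleton output event emitting `s`. -/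
def single (E : Event) (s : Signal) : Event :=
  fun t => if t = s then (E t).map fun _ => Status.pos
           else (E t).map fun _ => Status.neg

/-- Union of two output events. -/
def union (E₁ E₂ : Event) : Event := fun s =>
  match E₁ s, E₂ s with
  | some a, some b => some (a.or b)
  | some a, none => some a
  | none, o => o

/-- Update the status of a signal. -/
def update (E : Event) (s : Signal) (v : Status) : Event :=
  fun t => if t = s then some v else E t

/-- Restriction of an output event by a local signal declaration. -/
def restrict (E' : Event) (s : Signal) (old : Option Status) : Event :=
  fun t => if t = s then old.map (fun _ => Status.neg) else E' t

end Event

/-- The classical status corresponding to a polarity. -/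
def polStL : Bool → Status
  | true => .pos
  | false => .neg

/-- The logical behavioral semantics (LBS): `LBS E p E' k p'` means
`E ⊢ p → (E', k, p')`. -/
inductive LBS : Event → Stmt → Event → ℕ → Stmt → Prop
  | done {E : Event} {k : ℕ} :
      LBS E (.done k) E.blank k (.done 0)
  | emit {E : Event} {s : Signal} (h : E s ≠ none) :
      LBS E (.emit s) (E.single s) 0 (.done 0)
  | awaitP {E : Event} {pol : Bool} {s : Signal}
      (h : E s = some (polStL pol)) :
      LBS E (.awaitImm pol s) E.blank 0 (.done 0)
  | awaitM {E : Event} {pol : Bool} {s : Signal}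
      (h : E s = some (polStL (!pol))) :
      LBS E (.awaitImm pol s) E.blank 1 (.awaitImm pol s)
  | presentP {E E' : Event} {s : Signal} {p q p' : Stmt} {k : ℕ}
      (h : E s = some .pos) (hp : LBS E p E' k p') :
      LBS E (.present s p q) E' k p'
  | presentM {E E' : Event} {s : Signal} {p q q' : Stmt} {k : ℕ}
      (h : E s = some .neg) (hq : LBS E q E' k q') :
      LBS E (.present s p q) E' k q'
  | suspend {E E' : Event} {s : Signal} {p p' : Stmt} {k : ℕ}
      (hp : LBS E p E' k p') :
      LBS E (.suspend s p) E' k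
        (delta k (.seq (.awaitImm false s) (.suspend s p')))
  | seqK {E E' : Event} {p q p' : Stmt} {k : ℕ}
      (h : k ≠ 0) (hp : LBS E p E' k p') :
      LBS E (.seq p q) E' k (delta k (.seq p' q))
  | seq0 {E E₁ E₂ : Event} {p q p' q' : Stmt} {k : ℕ}
      (hp : LBS E p E₁ 0 p') (hq : LBS E q E₂ k q') :
      LBS E (.seq p q) (E₁.union E₂) k q'
  | loop {E E' : Event} {p p' : Stmt} {k : ℕ}
      (h : k ≠ 0) (hp : LBS E p E' k p') :
      LBS E (.loop p) E' k (delta k (.seq p' (.loop p)))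
  | trap {E E' : Event} {p p' : Stmt} {k : ℕ}
      (hp : LBS E p E' k p') :
      LBS E (.trap p) E' (kdown k) (delta k (.trap p'))
  | shift {E E' : Event} {p p' : Stmt} {k : ℕ}
      (hp : LBS E p E' k p') :
      LBS E (.shift p) E' (kup k) (delta k (.shift p'))
  | par {E E₁ E₂ : Event} {p q p' q' : Stmt} {k₁ k₂ : ℕ}
      (hp : LBS E p E₁ k₁ p') (hq : LBS E q E₂ k₂ q') :
      LBS E (.par p q) (E₁.union E₂) (max k₁ k₂)
        (delta (max k₁ k₂) (.par p' q'))
  | sigP {E E' : Event} {s : Signal} {p p' : Stmt} {k : ℕ}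
      (h : E' s = some .pos)
      (hp : LBS (E.update s .pos) p E' k p') :
      LBS E (.sig s p) (E'.restrict s (E s)) k (delta k (.sig s p'))
  | sigM {E E' : Event} {s : Signal} {p p' : Stmt} {k : ℕ}
      (h : E' s = some .neg)
      (hp : LBS (E.update s .neg) p E' k p') :
      LBS E (.sig s p) (E'.restrict s (E s)) k (delta k (.sig s p'))

/-- Conversion of a (total) constructive event to a classical event:
`+` goes to `+` and `−` goes to `−`. -/
def ctok (E : CEvent) : Event := fun s =>
  (E s).map fun a => match a with
    | .pos => .pos
    | _ => .neg

section Refinement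

/-! ### Basic helpers -/

lemma or_eq_pos {a b : CStatus} : a.or b = .pos ↔ a = .pos ∨ b = .pos := by
  cases a <;> cases b <;> simp [CStatus.or]

lemma unionC_pos_iff {E₁ E₂ : CEvent} {t : Signal} :
    (E₁.union E₂) t = some .pos ↔ E₁ t = some .pos ∨ E₂ t = some .pos := by
  unfold CEvent.union
  cases h₁ : E₁ t <;> cases h₂ : E₂ t <;> simp [or_eq_pos]

lemma blankC_ne_pos (E : CEvent) (t : Signal) : E.blank t ≠ some .pos := by
  unfold CEvent.blank; cases E t <;> simp

lemma mem_codeMax {K L : Finset ℕ} {j : ℕ} :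
    j ∈ codeMax K L ↔ ∃ k ∈ K, ∃ l ∈ L, max k l = j := by
  simp [codeMax]

lemma codeMax_mono {K K' L L' : Finset ℕ} (hK : K ⊆ K') (hL : L ⊆ L') :
    codeMax K L ⊆ codeMax K' L' := by
  intro j hj
  rw [mem_codeMax] at hj ⊢
  obtain ⟨k, hk, l, hl, hm⟩ := hj
  exact ⟨k, hK hk, l, hL hl, hm⟩

/-! ### The information order on constructive events -/

def CLE (E F : CEvent) : Prop := ∀ t, E t = F t ∨ (E t = some .bot ∧ F t ≠ none)

lemma CLE.refl (E : CEvent) : CLE E E := fun _ => Or.inl rfl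

lemma CLE.update {E F : CEvent} (h : CLE E F) (s : Signal) (v : CStatus) :
    CLE (E.update s v) (F.update s v) := by
  intro t
  by_cases ht : t = s
  · left; simp [CEvent.update, ht]
  · simpa [CEvent.update, ht] using h t

lemma CLE.update_bot_left {E F : CEvent} (h : CLE E F) (s : Signal) (v : CStatus) :
    CLE (E.update s .bot) (F.update s v) := by
  intro t
  by_cases ht : t = s
  · right; simp [CEvent.update, ht]
  · simpa [CEvent.update, ht] using h t

/-! ### `Must_K` has at most one element -/

theorem mustK_sub : ∀ (p : Stmt) (E : CEvent) ⦃j j' : ℕ⦄,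
    j ∈ (must p E).2 → j' ∈ (must p E).2 → j = j' := by
  intro p
  induction p with
  | done k =>
      intro E j j' hj hj'
      rw [must] at hj hj'
      simp only [Finset.mem_singleton] at hj hj'; omega
  | emit s =>
      intro E j j' hj hj'
      rw [must] at hj hj'
      simp only [Finset.mem_singleton] at hj hj'; omega
  | awaitImm pol s =>
      intro E j j' hj hj'
      rw [must] at hj hj'
      split_ifs at hj hj' <;> simp_all
  | present s p q ihp ihq =>
      intro E j j' hj hj'
      rw [must] at hj hj'
      split_ifs at hj hj'
      · exact ihp _ hj hj'
      · exact ihq _ hj hj'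
      · simp at hj
  | suspend s p ih =>
      intro E j j' hj hj'
      rw [must] at hj hj'
      exact ih _ hj hj'
  | seq p q ihp ihq =>
      intro E j j' hj hj'
      rw [must] at hj hj'
      split_ifs at hj hj'
      · exact ihq _ hj hj'
      · exact ihp _ hj hj'
  | par p q ihp ihq =>
      intro E j j' hj hj'
      rw [must] at hj hj'
      rw [mem_codeMax] at hj hj'
      obtain ⟨a, ha, b, hb, rfl⟩ := hj
      obtain ⟨a', ha', b', hb', rfl⟩ := hj'
      rw [ihp _ ha ha', ihq _ hb hb']
  | loop p ih =>
      intro E j j' hj hj'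
      rw [must] at hj hj'
      exact ih _ hj hj'
  | trap p ih =>
      intro E j j' hj hj'
      rw [must] at hj hj'
      simp only [Finset.mem_image] at hj hj'
      obtain ⟨a, ha, rfl⟩ := hj
      obtain ⟨a', ha', rfl⟩ := hj'
      rw [ih _ ha ha']
  | shift p ih =>
      intro E j j' hj hj'
      rw [must] at hj hj'
      simp only [Finset.mem_image] at hj hj'
      obtain ⟨a, ha, rfl⟩ := hj
      obtain ⟨a', ha', rfl⟩ := hj'
      rw [ih _ ha ha']
  | sig s p ih =>
      intro E j j' hj hj'
      rw [must] at hj hj'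
      split_ifs at hj hj'
      · exact ih _ hj hj'
      · exact ih _ hj hj'
      · exact ih _ hj hj'

/-! ### Monotonicity of `must`/`can` together with `Must ⊆ Can⁺` -/

theorem bigMono (p : Stmt) :
    (∀ E F, CLE E F →
      (must p E).1 ⊆ (must p F).1 ∧ (must p E).2 ⊆ (must p F).2) ∧
    (∀ (b c : Bool) (E F : CEvent), CLE E F → (b = true → c = true) →
      (can c p F).1 ⊆ (can b p E).1 ∧ (can c p F).2 ⊆ (can b p E).2) ∧
    (∀ E, (must p E).1 ⊆ (can true p E).1 ∧ (must p E).2 ⊆ (can true p E).2) := by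
  induction p with
  | done k =>
      refine ⟨?_, ?_, ?_⟩
      · intro E F _; simp [must]
      · intro b c E F _ _; simp [can]
      · intro E; simp [must, can]
  | emit s =>
      refine ⟨?_, ?_, ?_⟩
      · intro E F _; simp [must]
      · intro b c E F _ _; simp [can]
      · intro E; simp [must, can]
  | awaitImm pol s =>
      have hpp : ∀ v : CStatus, (some v = some (polSt pol)) → v = polSt pol := by
        intro v h; injection h
      refine ⟨?_, ?_, ?_⟩
      · intro E F h
        have h1 : (some CStatus.bot : Option CStatus) ≠ some (polSt pol) := by
          cases pol <;> simp [polSt]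
        have h2 : (some CStatus.bot : Option CStatus) ≠ some (polSt (!pol)) := by
          cases pol <;> simp [polSt]
        simp only [must]
        rcases h s with hs | ⟨hb, _⟩
        · rw [hs]
          exact ⟨Finset.Subset.refl _, Finset.Subset.refl _⟩
        · rw [hb, if_neg h1, if_neg h2]
          simp
      · intro b c E F h _
        have h1 : (some CStatus.bot : Option CStatus) ≠ some (polSt pol) := by
          cases pol <;> simp [polSt]
        have h2 : (some CStatus.bot : Option CStatus) ≠ some (polSt (!pol)) := by
          cases pol <;> simp [polSt]
        simp only [can]
        rcases h s with hs | ⟨hb, _⟩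
        · rw [hs]
          exact ⟨Finset.Subset.refl _, Finset.Subset.refl _⟩
        · rw [hb, if_neg h1, if_neg h2]
          split_ifs <;> refine ⟨by simp, ?_⟩ <;> intro x hx <;>
            simp at hx ⊢ <;> omega
      · intro E
        simp only [must, can]
        split_ifs <;> simp
  | present s p q ihp ihq =>
      refine ⟨?_, ?_, ?_⟩
      · intro E F h
        simp only [must]
        rcases h s with hs | ⟨hb, _⟩
        · rw [hs]
          split_ifs
          · exact ihp.1 E F h
          · exact ihq.1 E F h
          · simp
        · have hbp : (some CStatus.bot : Option CStatus) ≠ some CStatus.pos := by simp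
          have hbn : (some CStatus.bot : Option CStatus) ≠ some CStatus.neg := by simp
          rw [hb, if_neg hbp, if_neg hbn]
          simp
      · intro b c E F h hbc
        simp only [can]
        rcases h s with hs | ⟨hb, _⟩
        · rw [hs]
          split_ifs
          · exact ihp.2.1 b c E F h hbc
          · exact ihq.2.1 b c E F h hbc
          · exact ⟨Finset.union_subset_union (ihp.2.1 false false E F h (by simp)).1
                    (ihq.2.1 false false E F h (by simp)).1,
                  Finset.union_subset_union (ihp.2.1 false false E F h (by simp)).2
                    (ihq.2.1 false false E F h (by simp)).2⟩
        · have hbp : (some CStatus.bot : Option CStatus) ≠ some CStatus.pos := by simp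
          have hbn : (some CStatus.bot : Option CStatus) ≠ some CStatus.neg := by simp
          rw [hb, if_neg hbp, if_neg hbn]
          split_ifs
          · exact ⟨(ihp.2.1 false c E F h (by simp)).1.trans Finset.subset_union_left,
                   (ihp.2.1 false c E F h (by simp)).2.trans Finset.subset_union_left⟩
          · exact ⟨(ihq.2.1 false c E F h (by simp)).1.trans Finset.subset_union_right,
                   (ihq.2.1 false c E F h (by simp)).2.trans Finset.subset_union_right⟩
          · exact ⟨Finset.union_subset_union (ihp.2.1 false false E F h (by simp)).1
                    (ihq.2.1 false false E F h (by simp)).1,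
                  Finset.union_subset_union (ihp.2.1 false false E F h (by simp)).2
                    (ihq.2.1 false false E F h (by simp)).2⟩
      · intro E
        simp only [must, can]
        split_ifs
        · exact ihp.2.2 E
        · exact ihq.2.2 E
        · simp
  | suspend s p ih =>
      refine ⟨?_, ?_, ?_⟩
      · intro E F h; simp only [must]; exact ih.1 E F h
      · intro b c E F h hbc; simp only [can]; exact ih.2.1 b c E F h hbc
      · intro E; simp only [must, can]; exact ih.2.2 E
  | seq p q ihp ihq =>
      refine ⟨?_, ?_, ?_⟩
      · intro E F h
        simp only [must]
        by_cases h1 : 0 ∈ (must p E).2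
        · have h2 : 0 ∈ (must p F).2 := (ihp.1 E F h).2 h1
          rw [if_pos h1, if_pos h2]
          exact ⟨Finset.union_subset_union (ihp.1 E F h).1 (ihq.1 E F h).1,
                 (ihq.1 E F h).2⟩
        · rw [if_neg h1]
          by_cases h2 : 0 ∈ (must p F).2
          · rw [if_pos h2]
            refine ⟨(ihp.1 E F h).1.trans Finset.subset_union_left, ?_⟩
            intro j hj
            have hjF := (ihp.1 E F h).2 hj
            have hj0 : j = 0 := mustK_sub p F hjF h2
            exact absurd (hj0 ▸ hj) h1
          · rw [if_neg h2]; exact ihp.1 E F h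
      · intro b c E F h hbc
        simp only [can]
        have hp := ihp.2.1 b c E F h hbc
        by_cases hE : 0 ∈ (can b p E).2
        · rw [if_neg (not_not_intro hE)]
          by_cases hF : 0 ∈ (can c p F).2
          · rw [if_neg (not_not_intro hF)]
            by_cases hEm : 0 ∈ (must p E).2 ∧ b = true
            · have hFm : 0 ∈ (must p F).2 ∧ c = true :=
                ⟨(ihp.1 E F h).2 hEm.1, hbc hEm.2⟩
              rw [if_pos hEm, if_pos hFm]
              have hq := ihq.2.1 true true E F h (fun x => x)
              exact ⟨Finset.union_subset_union hp.1 hq.1,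
                     Finset.union_subset_union (Finset.erase_subset_erase _ hp.2) hq.2⟩
            · rw [if_neg hEm]
              by_cases hFm : 0 ∈ (must p F).2 ∧ c = true
              · rw [if_pos hFm]
                have hq := ihq.2.1 false true E F h (by simp)
                exact ⟨Finset.union_subset_union hp.1 hq.1,
                       Finset.union_subset_union (Finset.erase_subset_erase _ hp.2) hq.2⟩
              · rw [if_neg hFm]
                have hq := ihq.2.1 false false E F h (by simp)
                exact ⟨Finset.union_subset_union hp.1 hq.1,
                       Finset.union_subset_union (Finset.erase_subset_erase _ hp.2) hq.2⟩
          · rw [if_pos hF]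
            have hcode : (can c p F).2 ⊆ ((can b p E).2.erase 0) := by
              intro j hj
              exact Finset.mem_erase.mpr ⟨fun hj0 => hF (hj0 ▸ hj), hp.2 hj⟩
            by_cases hEm : 0 ∈ (must p E).2 ∧ b = true
            · rw [if_pos hEm]
              exact ⟨hp.1.trans Finset.subset_union_left,
                     hcode.trans Finset.subset_union_left⟩
            · rw [if_neg hEm]
              exact ⟨hp.1.trans Finset.subset_union_left,
                     hcode.trans Finset.subset_union_left⟩
        · have hF : 0 ∉ (can c p F).2 := fun hh => hE (hp.2 hh)
          rw [if_pos hF, if_pos hE]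
          exact hp
      · intro E
        simp only [must, can]
        have hC := ihp.2.2 E
        by_cases hm : 0 ∈ (must p E).2
        · have hc : 0 ∈ (can true p E).2 := hC.2 hm
          rw [if_pos hm, if_neg (not_not_intro hc), if_pos ⟨hm, by trivial⟩]
          exact ⟨Finset.union_subset_union hC.1 (ihq.2.2 E).1,
                 (ihq.2.2 E).2.trans Finset.subset_union_right⟩
        · rw [if_neg hm]
          by_cases hc : 0 ∈ (can true p E).2
          · rw [if_neg (not_not_intro hc), if_neg (by simp [hm])]
            refine ⟨hC.1.trans Finset.subset_union_left, ?_⟩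
            intro j hj
            refine Finset.mem_union_left _ (Finset.mem_erase.mpr ⟨?_, hC.2 hj⟩)
            intro hj0; exact hm (hj0 ▸ hj)
          · rw [if_pos hc]; exact hC
  | par p q ihp ihq =>
      refine ⟨?_, ?_, ?_⟩
      · intro E F h
        simp only [must]
        exact ⟨Finset.union_subset_union (ihp.1 E F h).1 (ihq.1 E F h).1,
               codeMax_mono (ihp.1 E F h).2 (ihq.1 E F h).2⟩
      · intro b c E F h hbc
        simp only [can]
        exact ⟨Finset.union_subset_union (ihp.2.1 b c E F h hbc).1
                 (ihq.2.1 b c E F h hbc).1,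
               codeMax_mono (ihp.2.1 b c E F h hbc).2 (ihq.2.1 b c E F h hbc).2⟩
      · intro E
        simp only [must, can]
        exact ⟨Finset.union_subset_union (ihp.2.2 E).1 (ihq.2.2 E).1,
               codeMax_mono (ihp.2.2 E).2 (ihq.2.2 E).2⟩
  | loop p ih =>
      refine ⟨?_, ?_, ?_⟩
      · intro E F h; simp only [must]; exact ih.1 E F h
      · intro b c E F h hbc; simp only [can]; exact ih.2.1 b c E F h hbc
      · intro E; simp only [must, can]; exact ih.2.2 E
  | trap p ih =>
      refine ⟨?_, ?_, ?_⟩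
      · intro E F h; simp only [must]
        exact ⟨(ih.1 E F h).1, Finset.image_subset_image (ih.1 E F h).2⟩
      · intro b c E F h hbc; simp only [can]
        exact ⟨(ih.2.1 b c E F h hbc).1,
               Finset.image_subset_image (ih.2.1 b c E F h hbc).2⟩
      · intro E; simp only [must, can]
        exact ⟨(ih.2.2 E).1, Finset.image_subset_image (ih.2.2 E).2⟩
  | shift p ih =>
      refine ⟨?_, ?_, ?_⟩
      · intro E F h; simp only [must]
        exact ⟨(ih.1 E F h).1, Finset.image_subset_image (ih.1 E F h).2⟩
      · intro b c E F h hbc; simp only [can]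
        exact ⟨(ih.2.1 b c E F h hbc).1,
               Finset.image_subset_image (ih.2.1 b c E F h hbc).2⟩
      · intro E; simp only [must, can]
        exact ⟨(ih.2.2 E).1, Finset.image_subset_image (ih.2.2 E).2⟩
  | sig s p ih =>
      refine ⟨?_, ?_, ?_⟩
      · intro E F h
        simp only [must]
        have hbo := h.update s .bot
        by_cases hME : s ∈ (must p (E.update s .bot)).1
        · have hMF : s ∈ (must p (F.update s .bot)).1 := (ih.1 _ _ hbo).1 hME
          rw [if_pos hME, if_pos hMF]
          have hm := ih.1 (E.update s .pos) (F.update s .pos) (h.update s .pos)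
          exact ⟨Finset.erase_subset_erase _ hm.1, hm.2⟩
        · rw [if_neg hME]
          by_cases hCE : s ∈ (can true p (E.update s .bot)).1
          · rw [if_neg (not_not_intro hCE)]
            by_cases hMF : s ∈ (must p (F.update s .bot)).1
            · rw [if_pos hMF]
              have hm := ih.1 (E.update s .bot) (F.update s .pos)
                (h.update_bot_left s .pos)
              exact ⟨Finset.erase_subset_erase _ hm.1, hm.2⟩
            · rw [if_neg hMF]
              by_cases hCF : s ∈ (can true p (F.update s .bot)).1
              · rw [if_neg (not_not_intro hCF)]
                have hm := ih.1 (E.update s .bot) (F.update s .bot) hbo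
                exact ⟨Finset.erase_subset_erase _ hm.1, hm.2⟩
              · rw [if_pos hCF]
                have hm := ih.1 (E.update s .bot) (F.update s .neg)
                  (h.update_bot_left s .neg)
                exact ⟨Finset.erase_subset_erase _ hm.1, hm.2⟩
          · rw [if_pos hCE]
            have hCF : s ∉ (can true p (F.update s .bot)).1 := fun hin =>
              hCE ((ih.2.1 true true _ _ hbo (fun x => x)).1 hin)
            have hMF : s ∉ (must p (F.update s .bot)).1 := fun hin =>
              hCF ((ih.2.2 _).1 hin)
            rw [if_neg hMF, if_pos hCF]
            have hm := ih.1 (E.update s .neg) (F.update s .neg) (h.update s .neg)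
            exact ⟨Finset.erase_subset_erase _ hm.1, hm.2⟩
      · intro b c E F h hbc
        simp only [can]
        have hbo := h.update s .bot
        by_cases hEi : s ∈ (must p (E.update s .bot)).1 ∧ b = true
        · have hFi : s ∈ (must p (F.update s .bot)).1 ∧ c = true :=
            ⟨(ih.1 _ _ hbo).1 hEi.1, hbc hEi.2⟩
          rw [if_pos hEi, if_pos hFi]
          have hm := ih.2.1 b c (E.update s .pos) (F.update s .pos) (h.update s .pos) hbc
          exact ⟨Finset.erase_subset_erase _ hm.1, hm.2⟩
        · rw [if_neg hEi]
          by_cases hCE : s ∈ (can true p (E.update s .bot)).1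
          · rw [if_neg (not_not_intro hCE)]
            by_cases hFi : s ∈ (must p (F.update s .bot)).1 ∧ c = true
            · rw [if_pos hFi]
              have hm := ih.2.1 b c (E.update s .bot) (F.update s .pos)
                (h.update_bot_left s .pos) hbc
              exact ⟨Finset.erase_subset_erase _ hm.1, hm.2⟩
            · rw [if_neg hFi]
              by_cases hCF : s ∈ (can true p (F.update s .bot)).1
              · rw [if_neg (not_not_intro hCF)]
                have hm := ih.2.1 b c (E.update s .bot) (F.update s .bot) hbo hbc
                exact ⟨Finset.erase_subset_erase _ hm.1, hm.2⟩
              · rw [if_pos hCF]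
                have hm := ih.2.1 b c (E.update s .bot) (F.update s .neg)
                  (h.update_bot_left s .neg) hbc
                exact ⟨Finset.erase_subset_erase _ hm.1, hm.2⟩
          · rw [if_pos hCE]
            have hCF : s ∉ (can true p (F.update s .bot)).1 := fun hin =>
              hCE ((ih.2.1 true true _ _ hbo (fun x => x)).1 hin)
            have hFi : ¬(s ∈ (must p (F.update s .bot)).1 ∧ c = true) := by
              rintro ⟨hin, _⟩
              exact hCF ((ih.2.2 _).1 hin)
            rw [if_neg hFi, if_pos hCF]
            have hm := ih.2.1 b c (E.update s .neg) (F.update s .neg) (h.update s .neg) hbc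
            exact ⟨Finset.erase_subset_erase _ hm.1, hm.2⟩
      · intro E
        simp only [must, can]
        by_cases hM : s ∈ (must p (E.update s .bot)).1
        · rw [if_pos hM, if_pos ⟨hM, by trivial⟩]
          have hm := ih.2.2 (E.update s .pos)
          exact ⟨Finset.erase_subset_erase _ hm.1, hm.2⟩
        · have hMc : ¬(s ∈ (must p (E.update s .bot)).1 ∧ True) := fun hc => hM hc.1
          rw [if_neg hM, if_neg hMc]
          by_cases hC : s ∈ (can true p (E.update s .bot)).1
          · rw [if_neg (not_not_intro hC), if_neg (not_not_intro hC)]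
            have hm := ih.2.2 (E.update s .bot)
            exact ⟨Finset.erase_subset_erase _ hm.1, hm.2⟩
          · rw [if_pos hC, if_pos hC]
            have hm := ih.2.2 (E.update s .neg)
            exact ⟨Finset.erase_subset_erase _ hm.1, hm.2⟩

lemma must_mono {p : Stmt} {E F : CEvent} (h : CLE E F) :
    (must p E).1 ⊆ (must p F).1 ∧ (must p E).2 ⊆ (must p F).2 :=
  (bigMono p).1 E F h

lemma can_anti {p : Stmt} (b c : Bool) {E F : CEvent} (h : CLE E F)
    (hbc : b = true → c = true) :
    (can c p F).1 ⊆ (can b p E).1 ∧ (can c p F).2 ⊆ (can b p E).2 :=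
  (bigMono p).2.1 b c E F h hbc

lemma must_sub_can {p : Stmt} (E : CEvent) :
    (must p E).1 ⊆ (can true p E).1 ∧ (must p E).2 ⊆ (can true p E).2 :=
  (bigMono p).2.2 E

/-! ### Soundness of `must` and completeness of `can` along CBS derivations -/

theorem must_sound {E E' : CEvent} {p p' : Stmt} {k : ℕ} (h : CBS E p E' k p') :
    (∀ t ∈ (must p E).1, E' t = some .pos) ∧ ∀ j ∈ (must p E).2, j = k := by
  induction h with
  | done => constructor <;> rw [must] <;> simp
  | @emit E s h =>
      constructor
      · intro t ht
        rw [must] at ht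
        simp only [Finset.mem_singleton] at ht
        subst ht
        rcases hv : E t with _ | v
        · exact absurd hv h
        · simp [CEvent.single, hv]
      · rw [must]; simp
  | @awaitP E pol s h =>
      constructor
      · rw [must, if_pos h]; simp
      · rw [must, if_pos h]; simp
  | @awaitM E pol s h =>
      have hne : E s ≠ some (polSt pol) := by rw [h]; cases pol <;> simp [polSt]
      constructor
      · rw [must, if_neg hne, if_pos h]; simp
      · rw [must, if_neg hne, if_pos h]; simp
  | @presentP E E' s p q p' k h hp ih =>
      constructor
      · rw [must, if_pos h]; exact ih.1
      · rw [must, if_pos h]; exact ih.2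
  | @presentM E E' s p q q' k h hq ih =>
      have hne : E s ≠ some .pos := by rw [h]; simp
      constructor
      · rw [must, if_neg hne, if_pos h]; exact ih.1
      · rw [must, if_neg hne, if_pos h]; exact ih.2
  | suspend hp ih =>
      constructor
      · rw [must]; exact ih.1
      · rw [must]; exact ih.2
  | @seqK E E' p q p' k hk hp ih =>
      have h0 : 0 ∉ (must p E).2 := fun h0 => hk ((ih.2 0 h0).symm)
      constructor
      · rw [must, if_neg h0]; exact ih.1
      · rw [must, if_neg h0]; exact ih.2
  | @seq0 E E₁ E₂ p q p' q' k hp hq ihp ihq =>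
      by_cases h0 : 0 ∈ (must p E).2
      · constructor
        · rw [must, if_pos h0]
          intro t ht
          rcases Finset.mem_union.mp ht with ht | ht
          · exact unionC_pos_iff.mpr (Or.inl (ihp.1 t ht))
          · exact unionC_pos_iff.mpr (Or.inr (ihq.1 t ht))
        · rw [must, if_pos h0]; exact ihq.2
      · constructor
        · rw [must, if_neg h0]
          intro t ht
          exact unionC_pos_iff.mpr (Or.inl (ihp.1 t ht))
        · rw [must, if_neg h0]
          intro j hj
          exact absurd ((ihp.2 j hj) ▸ hj) h0
  | @loop E E' p p' k hk hp ih =>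
      constructor
      · rw [must]; exact ih.1
      · rw [must]; exact ih.2
  | @trap E E' p p' k hp ih =>
      constructor
      · rw [must]; exact ih.1
      · rw [must]
        intro j hj
        simp only [Finset.mem_image] at hj
        obtain ⟨a, ha, rfl⟩ := hj
        rw [ih.2 a ha]
  | @shift E E' p p' k hp ih =>
      constructor
      · rw [must]; exact ih.1
      · rw [must]
        intro j hj
        simp only [Finset.mem_image] at hj
        obtain ⟨a, ha, rfl⟩ := hj
        rw [ih.2 a ha]
  | @par E E₁ E₂ p q p' q' k₁ k₂ hp hq ihp ihq =>
      constructor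
      · rw [must]
        intro t ht
        rcases Finset.mem_union.mp ht with ht | ht
        · exact unionC_pos_iff.mpr (Or.inl (ihp.1 t ht))
        · exact unionC_pos_iff.mpr (Or.inr (ihq.1 t ht))
      · rw [must]
        intro j hj
        rw [mem_codeMax] at hj
        obtain ⟨a, ha, b, hb, rfl⟩ := hj
        rw [ihp.2 a ha, ihq.2 b hb]
  | @sigP E E' s p p' k h hp ih =>
      constructor
      · rw [must, if_pos h]
        intro t ht
        obtain ⟨hts, ht'⟩ := Finset.mem_erase.mp ht
        have := ih.1 t ht'
        simp [CEvent.restrict, hts, this]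
      · rw [must, if_pos h]; exact ih.2
  | @sigM E E' s p p' k h hp ih =>
      have hM : s ∉ (must p (E.update s .bot)).1 := fun hin =>
        h ((must_sub_can _).1 hin)
      constructor
      · rw [must, if_neg hM, if_pos h]
        intro t ht
        obtain ⟨hts, ht'⟩ := Finset.mem_erase.mp ht
        have := ih.1 t ht'
        simp [CEvent.restrict, hts, this]
      · rw [must, if_neg hM, if_pos h]; exact ih.2

theorem can_complete {E E' : CEvent} {p p' : Stmt} {k : ℕ} (h : CBS E p E' k p') :
    ∀ b : Bool, (∀ t, E' t = some .pos → t ∈ (can b p E).1) ∧ k ∈ (can b p E).2 := by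
  induction h with
  | @done E k =>
      intro b
      constructor
      · intro t ht; exact absurd ht (blankC_ne_pos E t)
      · rw [can]; simp
  | @emit E s h =>
      intro b
      constructor
      · intro t ht
        rw [can]
        simp only [Finset.mem_singleton]
        by_contra hts
        revert ht
        unfold CEvent.single
        rw [if_neg hts]
        cases E t <;> simp
      · rw [can]; simp
  | @awaitP E pol s h =>
      intro b
      constructor
      · intro t ht; exact absurd ht (blankC_ne_pos E t)
      · rw [can, if_pos h]; simp
  | @awaitM E pol s h =>
      have hne : E s ≠ some (polSt pol) := by rw [h]; cases pol <;> simp [polSt]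
      intro b
      constructor
      · intro t ht; exact absurd ht (blankC_ne_pos E t)
      · rw [can, if_neg hne, if_pos h]; simp
  | @presentP E E' s p q p' k h hp ih =>
      intro b
      constructor
      · intro t ht; rw [can, if_pos h]; exact (ih b).1 t ht
      · rw [can, if_pos h]; exact (ih b).2
  | @presentM E E' s p q q' k h hq ih =>
      have hne : E s ≠ some .pos := by rw [h]; simp
      intro b
      constructor
      · intro t ht; rw [can, if_neg hne, if_pos h]; exact (ih b).1 t ht
      · rw [can, if_neg hne, if_pos h]; exact (ih b).2
  | suspend hp ih =>
      intro b
      constructor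
      · intro t ht; rw [can]; exact (ih b).1 t ht
      · rw [can]; exact (ih b).2
  | @seqK E E' p q p' k hk hp ih =>
      intro b
      by_cases h0 : 0 ∈ (can b p E).2
      · have hmem : k ∈ ((can b p E).2.erase 0) := Finset.mem_erase.mpr ⟨hk, (ih b).2⟩
        constructor
        · intro t ht
          rw [can, if_neg (not_not_intro h0)]
          split_ifs <;> exact Finset.mem_union_left _ ((ih b).1 t ht)
        · rw [can, if_neg (not_not_intro h0)]
          split_ifs <;> exact Finset.mem_union_left _ hmem
      · constructor
        · intro t ht; rw [can, if_pos h0]; exact (ih b).1 t ht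
        · rw [can, if_pos h0]; exact (ih b).2
  | @seq0 E E₁ E₂ p q p' q' k hp hq ihp ihq =>
      intro b
      have h0 : 0 ∈ (can b p E).2 := (ihp b).2
      by_cases hm : 0 ∈ (must p E).2 ∧ b = true
      · constructor
        · intro t ht
          rw [can, if_neg (not_not_intro h0), if_pos hm]
          rcases unionC_pos_iff.mp ht with ht | ht
          · exact Finset.mem_union_left _ ((ihp b).1 t ht)
          · exact Finset.mem_union_right _ ((ihq true).1 t ht)
        · rw [can, if_neg (not_not_intro h0), if_pos hm]
          exact Finset.mem_union_right _ (ihq true).2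
      · constructor
        · intro t ht
          rw [can, if_neg (not_not_intro h0), if_neg hm]
          rcases unionC_pos_iff.mp ht with ht | ht
          · exact Finset.mem_union_left _ ((ihp b).1 t ht)
          · exact Finset.mem_union_right _ ((ihq false).1 t ht)
        · rw [can, if_neg (not_not_intro h0), if_neg hm]
          exact Finset.mem_union_right _ (ihq false).2
  | @loop E E' p p' k hk hp ih =>
      intro b
      constructor
      · intro t ht; rw [can]; exact (ih b).1 t ht
      · rw [can]; exact (ih b).2
  | @trap E E' p p' k hp ih =>
      intro b
      constructor
      · intro t ht; rw [can]; exact (ih b).1 t ht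
      · rw [can]
        exact Finset.mem_image.mpr ⟨k, (ih b).2, rfl⟩
  | @shift E E' p p' k hp ih =>
      intro b
      constructor
      · intro t ht; rw [can]; exact (ih b).1 t ht
      · rw [can]
        exact Finset.mem_image.mpr ⟨k, (ih b).2, rfl⟩
  | @par E E₁ E₂ p q p' q' k₁ k₂ hp hq ihp ihq =>
      intro b
      constructor
      · intro t ht
        rw [can]
        rcases unionC_pos_iff.mp ht with ht | ht
        · exact Finset.mem_union_left _ ((ihp b).1 t ht)
        · exact Finset.mem_union_right _ ((ihq b).1 t ht)
      · rw [can]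
        exact mem_codeMax.mpr ⟨k₁, (ihp b).2, k₂, (ihq b).2, rfl⟩
  | @sigP E E' s p p' k h hp ih =>
      intro b
      have hres : ∀ t, (E'.restrict s (E s)) t = some .pos → t ≠ s ∧ E' t = some .pos := by
        intro t ht
        by_cases hts : t = s
        · exfalso
          revert ht
          unfold CEvent.restrict
          rw [if_pos hts]
          cases E s <;> simp
        · refine ⟨hts, ?_⟩
          unfold CEvent.restrict at ht
          rwa [if_neg hts] at ht
      by_cases hb : b = true
      · subst hb
        constructor
        · intro t ht
          obtain ⟨hts, ht'⟩ := hres t ht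
          rw [can, if_pos ⟨h, by trivial⟩]
          exact Finset.mem_erase.mpr ⟨hts, (ih true).1 t ht'⟩
        · rw [can, if_pos ⟨h, by trivial⟩]; exact (ih true).2
      · have hC : s ∈ (can true p (E.update s .bot)).1 :=
          (can_anti true true ((CLE.refl E).update_bot_left s .pos) (fun x => x)).1
            ((must_sub_can _).1
              ((must_mono ((CLE.refl E).update_bot_left s .pos)).1 h))
        have hanti := can_anti (p := p) b b (E := E.update s .bot) (F := E.update s .pos)
          ((CLE.refl E).update_bot_left s .pos) (fun x => x)
        constructor
        · intro t ht
          obtain ⟨hts, ht'⟩ := hres t ht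
          rw [can, if_neg (by simp [hb]), if_neg (not_not_intro hC)]
          exact Finset.mem_erase.mpr ⟨hts, hanti.1 ((ih b).1 t ht')⟩
        · rw [can, if_neg (by simp [hb]), if_neg (not_not_intro hC)]
          exact hanti.2 (ih b).2
  | @sigM E E' s p p' k h hp ih =>
      intro b
      have hres : ∀ t, (E'.restrict s (E s)) t = some .pos → t ≠ s ∧ E' t = some .pos := by
        intro t ht
        by_cases hts : t = s
        · exfalso
          revert ht
          unfold CEvent.restrict
          rw [if_pos hts]
          cases E s <;> simp
        · refine ⟨hts, ?_⟩
          unfold CEvent.restrict at ht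
          rwa [if_neg hts] at ht
      have hni : ¬(s ∈ (must p (E.update s .bot)).1 ∧ b = true) := by
        rintro ⟨hin, _⟩
        exact h ((must_sub_can _).1 hin)
      constructor
      · intro t ht
        obtain ⟨hts, ht'⟩ := hres t ht
        rw [can, if_neg hni, if_pos h]
        exact Finset.mem_erase.mpr ⟨hts, (ih b).1 t ht'⟩
      · rw [can, if_neg hni, if_pos h]; exact (ih b).2

/-! ### Domain preservation -/

lemma unionC_ne_none_left {E₁ E₂ : CEvent} {t : Signal} (h : E₁ t ≠ none) :
    (E₁.union E₂) t ≠ none := by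
  unfold CEvent.union
  cases h₁ : E₁ t
  · exact absurd h₁ h
  · cases E₂ t <;> simp

theorem cbs_dom {E E' : CEvent} {p p' : Stmt} {k : ℕ} (h : CBS E p E' k p') :
    ∀ t, E t ≠ none → E' t ≠ none := by
  induction h with
  | @done E k =>
      intro t ht
      unfold CEvent.blank
      cases hv : E t
      · exact absurd hv ht
      · simp
  | @emit E s h =>
      intro t ht
      unfold CEvent.single
      cases hv : E t
      · exact absurd hv ht
      · split_ifs <;> simp [hv]
  | @awaitP E pol s h =>
      intro t ht
      unfold CEvent.blank
      cases hv : E t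
      · exact absurd hv ht
      · simp
  | @awaitM E pol s h =>
      intro t ht
      unfold CEvent.blank
      cases hv : E t
      · exact absurd hv ht
      · simp
  | presentP h hp ih => exact ih
  | presentM h hq ih => exact ih
  | suspend hp ih => exact ih
  | seqK hk hp ih => exact ih
  | seq0 hp hq ihp ihq =>
      intro t ht
      exact unionC_ne_none_left (ihp t ht)
  | loop hk hp ih => exact ih
  | trap hp ih => exact ih
  | shift hp ih => exact ih
  | par hp hq ihp ihq =>
      intro t ht
      exact unionC_ne_none_left (ihp t ht)
  | @sigP E E' s p p' k h hp ih =>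
      intro t ht
      unfold CEvent.restrict
      by_cases hts : t = s
      · rw [if_pos hts]
        subst hts
        cases hv : E t
        · exact absurd hv ht
        · simp
      · rw [if_neg hts]
        apply ih
        simp [CEvent.update, hts, ht]
  | @sigM E E' s p p' k h hp ih =>
      intro t ht
      unfold CEvent.restrict
      by_cases hts : t = s
      · rw [if_pos hts]
        subst hts
        cases hv : E t
        · exact absurd hv ht
        · simp
      · rw [if_neg hts]
        apply ih
        simp [CEvent.update, hts, ht]

/-! ### `ctok` commutation lemmas -/

lemma ctok_blank (E : CEvent) : ctok E.blank = (ctok E).blank := by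
  funext t
  simp only [ctok, CEvent.blank, Event.blank]
  cases E t <;> rfl

lemma ctok_single (E : CEvent) (s : Signal) :
    ctok (E.single s) = (ctok E).single s := by
  funext t
  simp only [ctok, CEvent.single, Event.single]
  by_cases hts : t = s
  · rw [if_pos hts, if_pos hts]; cases E t <;> rfl
  · rw [if_neg hts, if_neg hts]; cases E t <;> rfl

lemma ctok_union (E₁ E₂ : CEvent) :
    ctok (E₁.union E₂) = (ctok E₁).union (ctok E₂) := by
  funext t
  simp only [ctok, CEvent.union, Event.union]
  cases h₁ : E₁ t with
  | none => cases E₂ t <;> rfl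
  | some a =>
    cases h₂ : E₂ t with
    | none => rfl
    | some b => cases a <;> cases b <;> rfl

lemma ctok_update_pos (E : CEvent) (s : Signal) :
    ctok (E.update s .pos) = (ctok E).update s .pos := by
  funext t
  simp only [ctok, CEvent.update, Event.update]
  by_cases hts : t = s
  · rw [if_pos hts, if_pos hts]; rfl
  · rw [if_neg hts, if_neg hts]

lemma ctok_update_neg (E : CEvent) (s : Signal) :
    ctok (E.update s .neg) = (ctok E).update s .neg := by
  funext t
  simp only [ctok, CEvent.update, Event.update]
  by_cases hts : t = s
  · rw [if_pos hts, if_pos hts]; rfl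
  · rw [if_neg hts, if_neg hts]

lemma ctok_restrict (E' E : CEvent) (s : Signal) :
    ctok (E'.restrict s (E s)) = (ctok E').restrict s (ctok E s) := by
  funext t
  simp only [ctok, CEvent.restrict, Event.restrict]
  by_cases hts : t = s
  · rw [if_pos hts, if_pos hts]; cases E s <;> rfl
  · rw [if_neg hts, if_neg hts]

lemma ctok_pos {E : CEvent} {s : Signal} (h : E s = some .pos) :
    ctok E s = some .pos := by
  simp only [ctok]; rw [h]; rfl

lemma ctok_neg {E : CEvent} {s : Signal} (h : E s = some .neg) :
    ctok E s = some .neg := by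
  simp only [ctok]; rw [h]; rfl

/-! ### Main theorem -/

theorem cbs_refines_aux {E E' : CEvent} {p p' : Stmt} {k : ℕ}
    (h : CBS E p E' k p') : LBS (ctok E) p (ctok E') k p' := by
  induction h with
  | done => rw [ctok_blank]; exact LBS.done
  | @emit E s h =>
      rw [ctok_single]
      refine LBS.emit ?_
      simp only [ctok]
      cases hv : E s
      · exact absurd hv h
      · simp
  | @awaitP E pol s h =>
      rw [ctok_blank]
      refine LBS.awaitP ?_
      simp only [ctok]
      rw [h]
      cases pol <;> rfl
  | @awaitM E pol s h =>
      rw [ctok_blank]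
      refine LBS.awaitM ?_
      simp only [ctok]
      rw [h]
      cases pol <;> rfl
  | @presentP E E' s p q p' k h hp ih =>
      exact LBS.presentP (ctok_pos h) ih
  | @presentM E E' s p q q' k h hq ih =>
      exact LBS.presentM (ctok_neg h) ih
  | suspend hp ih => exact LBS.suspend ih
  | seqK hk hp ih => exact LBS.seqK hk ih
  | seq0 hp hq ihp ihq => rw [ctok_union]; exact LBS.seq0 ihp ihq
  | loop hk hp ih => exact LBS.loop hk ih
  | trap hp ih => exact LBS.trap ih
  | shift hp ih => exact LBS.shift ih
  | par hp hq ihp ihq => rw [ctok_union]; exact LBS.par ihp ihq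
  | @sigP E E' s p p' k h hp ih =>
      have hM : s ∈ (must p (E.update s .pos)).1 :=
        (must_mono ((CLE.refl E).update_bot_left s .pos)).1 h
      have hpos : E' s = some .pos := (must_sound hp).1 s hM
      rw [ctok_restrict]
      refine LBS.sigP (ctok_pos hpos) ?_
      rwa [ctok_update_pos] at ih
  | @sigM E E' s p p' k h hp ih =>
      have hdom : E' s ≠ none := cbs_dom hp s (by simp [CEvent.update])
      have hnp : E' s ≠ some .pos := by
        intro hps
        have hin : s ∈ (can true p (E.update s .neg)).1 :=
          (can_complete hp true).1 s hps
        exact h ((can_anti true true ((CLE.refl E).update_bot_left s .neg)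
          (fun x => x)).1 hin)
      have hneg : ctok E' s = some .neg := by
        simp only [ctok]
        rcases hv : E' s with _ | v
        · exact absurd hv hdom
        · cases v
          · exact absurd hv hnp
          · rfl
          · rfl
      rw [ctok_restrict]
      refine LBS.sigM hneg ?_
      rwa [ctok_update_neg] at ih

/-- **The constructive behavioral semantics refines the logical behavioral
semantics**: if `E` is total and `E ⊢ p → (E', k, p')` in the CBS, then
`CtoK(E) ⊢ p → (CtoK(E'), k, p')` in the LBS. -/
theorem cbs_refines_lbs :
    ∀ (p p' : Stmt) (E E' : CEvent) (k : ℕ),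
      E.Total → CBS E p E' k p' → LBS (ctok E) p (ctok E') k p' :=
  fun _ _ _ _ _ _ h => cbs_refines_aux h

end Refinement

end EsterelCBS
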